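/- Let p be a prime and m = p^f > 2 a power of p. Then for every α in the ring of integers Z[ζ_m] of Q(ζ_m) that lies outside the unique prime ideal of Z[ζ_m] above p, the absolute norm satisfies N_{Q(ζ_m)/Q}(α) ≡ 1 (mod m). -/

import Mathlib

/-!
Since `ℚ(ζ_m)` is totally complex for `m > 2`, complex embeddings pair off with their conjugates and
the norm of `α ≠ 0` is positive, hence equal to the absolute norm of the ideal `(α)`, the product of
the absolute norms of its prime factors. None of these lies above `p`, so `m` is invertible in each
residue field, where the image of `ζ_m` is then a primitive `m`-th root of unity; thus `m` divides
the order of the unit group, i.e. every prime factor has absolute norm `≡ 1 mod m`.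
-/

open NumberField

open ComplexConjugate in
theorem Complex.prod_eq_prod_norm_of_involutive {ι : Type*} [Fintype ι] {g : ι → ι}
    (hg : Function.Involutive g) (hfix : ∀ i, g i ≠ i) {z : ι → ℂ}
    (hz : ∀ i, z (g i) = conj (z i)) : ∏ i, z i = ∏ i, (‖z i‖ : ℂ) := by
  by_cases hzero : ∃ i, z i = 0
  · obtain ⟨i, hi⟩ := hzero
    rw [Finset.prod_eq_zero (Finset.mem_univ i) hi,
      Finset.prod_eq_zero (Finset.mem_univ i) (by simp [hi])]
  push Not at hzero
  have hnorm : ∀ i, (‖z i‖ : ℂ) ≠ 0 := fun i => by simpa using hzero i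
  have hphase : ∏ i, z i / ‖z i‖ = 1 := by
    refine Finset.prod_ninvolution g (fun i => ?_) (fun i _ => hfix i)
      (fun _ => Finset.mem_univ _) hg
    rw [hz, Complex.norm_conj, div_mul_div_comm, Complex.mul_conj', ← Complex.ofReal_pow, sq,
      Complex.ofReal_mul, div_self (mul_ne_zero (hnorm i) (hnorm i))]
  calc ∏ i, z i = ∏ i, (z i / ‖z i‖ * ‖z i‖) :=
        Finset.prod_congr rfl fun i _ => (div_mul_cancel₀ _ (hnorm i)).symm
    _ = ∏ i, (‖z i‖ : ℂ) := by rw [Finset.prod_mul_distrib, hphase, one_mul]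

theorem NumberField.norm_pos_of_isTotallyComplex {K : Type*} [Field K] [NumberField K]
    [IsTotallyComplex K] {x : K} (hx : x ≠ 0) : 0 < Algebra.norm ℚ x := by
  have hprod : (Algebra.norm ℚ x : ℂ) = ∏ φ : K →+* ℂ, φ x := by
    rw [← eq_ratCast (algebraMap ℚ ℂ), Algebra.norm_eq_prod_embeddings ℚ ℂ x,
      ← Fintype.prod_equiv (RingHom.equivRatAlgHom K ℂ) (fun φ => φ x) (fun σ => σ x)
        fun _ => by simp [RingHom.equivRatAlgHom_apply]]
  rw [Complex.prod_eq_prod_norm_of_involutive (ComplexEmbedding.involutive_conjugate K)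
      (fun φ => mt ComplexEmbedding.isReal_iff.mpr (IsTotallyComplex.complexEmbedding_not_isReal φ))
      (ComplexEmbedding.conjugate_coe_eq · x), ← Complex.ofReal_prod] at hprod
  have hreal : (Algebra.norm ℚ x : ℝ) = ∏ φ : K →+* ℂ, ‖φ x‖ := by exact_mod_cast hprod
  have : (0 : ℝ) < Algebra.norm ℚ x :=
    hreal ▸ Finset.prod_pos fun φ _ => norm_pos_iff.mpr ((map_ne_zero φ).mpr hx)
  exact_mod_cast this


theorem IsPrimitiveRoot.natCard_quotient_modEq_one {R : Type*} [CommRing R] [IsDomain R]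
    {ζ : R} {n : ℕ} (hζ : IsPrimitiveRoot ζ n) (Q : Ideal R) [Q.IsMaximal] [Finite (R ⧸ Q)]
    (hn : (n : R) ∉ Q) : Nat.card (R ⧸ Q) ≡ 1 [MOD n] := by
  let := Ideal.Quotient.field Q
  have : NeZero (n : R ⧸ Q) :=
    ⟨by rwa [← map_natCast (Ideal.Quotient.mk Q), Ne, Ideal.Quotient.eq_zero_iff_mem]⟩
  have hn0 : 0 < n := Nat.pos_of_ne_zero (NeZero.of_map (Nat.castRingHom (R ⧸ Q))).ne
  -- `ζ mod Q` is a root of the `n`-th cyclotomic polynomial, which has only primitive roots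
  -- once `n` is invertible.
  have hroot := (hζ.isRoot_cyclotomic hn0).map (f := Ideal.Quotient.mk Q)
  rw [Polynomial.map_cyclotomic] at hroot
  have hζQ : IsPrimitiveRoot (Ideal.Quotient.mk Q ζ) n :=
    Polynomial.isRoot_cyclotomic_iff.mp hroot
  have hdvd : n ∣ Nat.card (R ⧸ Q)ˣ :=
    (hζQ.isUnit_unit hn0.ne').dvd_of_pow_eq_one _ (pow_card_eq_one' (G := (R ⧸ Q)ˣ))
  rw [Nat.card_units] at hdvd
  exact ((Nat.modEq_iff_dvd' Nat.card_pos).mpr hdvd).symm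

namespace Ideal

variable {S : Type*} [CommRing S] [IsDedekindDomain S] [Module.Free ℤ S]

theorem absNorm_modEq_one_of_forall_isPrime {n : ℕ} {I : Ideal S} (hI : I ≠ ⊥)
    (h : ∀ P : Ideal S, P.IsPrime → I ≤ P → absNorm P ≡ 1 [MOD n]) : absNorm I ≡ 1 [MOD n] := by
  suffices ∀ J : Ideal S, J ∣ I → absNorm J ≡ 1 [MOD n] from this I dvd_rfl
  intro J
  induction J using UniqueFactorizationMonoid.induction_on_prime with
  | h₁ => exact fun h0 => absurd (zero_dvd_iff.mp h0) hI
  | h₂ J hJ => exact fun _ => by rw [isUnit_iff.mp hJ, absNorm_top]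
  | h₃ J P _ hP ih =>
    intro hdvd
    rw [map_mul]
    exact (h P (isPrime_of_prime hP) (le_of_dvd (dvd_of_mul_right_dvd hdvd))).mul
      (ih (dvd_of_mul_left_dvd hdvd))

variable [Module.Finite ℤ S]

theorem exists_isMaximal_natCast_mem {n : ℕ} (hn : n ≠ 1) :
    ∃ Q : Ideal S, Q.IsMaximal ∧ (n : S) ∈ Q := by
  obtain ⟨Q, hQ, hle⟩ := exists_le_maximal (span {(n : S)}) fun htop => by
    have := congrArg absNorm htop
    rw [absNorm_span_natCast, absNorm_top, Nat.pow_eq_one] at this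
    exact this.elim hn Module.finrank_pos.ne'
  exact ⟨Q, hQ, hle (mem_span_singleton_self _)⟩

theorem absNorm_modEq_one_of_isPrimitiveRoot {ζ : S} {n : ℕ} (hζ : IsPrimitiveRoot ζ n)
    {P : Ideal S} [hP : P.IsPrime] (hP0 : P ≠ ⊥) (hn : (n : S) ∉ P) : absNorm P ≡ 1 [MOD n] := by
  have := hP.isMaximal hP0
  have := finiteQuotientOfFreeOfNeBot P hP0
  rw [absNorm_apply, Submodule.cardQuot_apply]
  exact hζ.natCard_quotient_modEq_one P hn

end Ideal

theorem stmt_6_general (p : ℕ) (m : ℕ+) (f : ℕ) (hm : (m : ℕ) = p ^ f)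
    (hm2 : 2 < (m : ℕ))
    (α : 𝓞 (CyclotomicField m ℚ))
    (hα : ∀ Q : Ideal (𝓞 (CyclotomicField m ℚ)), Q.IsPrime →
      (p : 𝓞 (CyclotomicField m ℚ)) ∈ Q → α ∉ Q) :
    ∃ a : ℤ,
      Algebra.norm ℚ (algebraMap (𝓞 (CyclotomicField m ℚ)) (CyclotomicField m ℚ) α) = (a : ℚ) ∧
      a ≡ 1 [ZMOD ((m : ℕ) : ℤ)] := by
  let K := CyclotomicField m ℚ
  have : IsCyclotomicExtension {(m : ℕ)} ℚ K := CyclotomicField.isCyclotomicExtension _ _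
  have : NumberField K := IsCyclotomicExtension.numberField {(m : ℕ)} ℚ K
  have : IsTotallyComplex K := IsCyclotomicExtension.Rat.isTotallyComplex K hm2
  have hp1 : p ≠ 1 := by rintro rfl; simp [hm] at hm2
  have hα0 : α ≠ 0 := by
    obtain ⟨Q, hQ, hpQ⟩ := Ideal.exists_isMaximal_natCast_mem (S := 𝓞 K) hp1
    exact fun h => hα Q hQ.isPrime hpQ (h ▸ Q.zero_mem)
  have hnorm : 0 < Algebra.norm ℤ α := by
    have := norm_pos_of_isTotallyComplex (RingOfIntegers.coe_ne_zero_iff.mpr hα0)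
    rwa [← Algebra.coe_norm_int, Rat.intCast_pos] at this
  refine ⟨Algebra.norm ℤ α, (Algebra.coe_norm_int α).symm, ?_⟩
  rw [← Int.natAbs_of_nonneg hnorm.le, ← Ideal.absNorm_span_singleton, ← Nat.cast_one,
    Int.natCast_modEq_iff]
  refine Ideal.absNorm_modEq_one_of_forall_isPrime (by simpa using hα0) fun P hP hle => ?_
  have hαP : α ∈ P := hle (Ideal.mem_span_singleton_self α)
  have hmP : ((m : ℕ) : 𝓞 K) ∉ P := by
    rw [show ((m : ℕ) : 𝓞 K) = (p : 𝓞 K) ^ f by rw [← Nat.cast_pow, ← hm]]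
    exact fun h => hα P hP (hP.mem_of_pow_mem f h) hαP
  exact Ideal.absNorm_modEq_one_of_isPrimitiveRoot
    (IsCyclotomicExtension.zeta_spec m ℚ K).toInteger_isPrimitiveRoot
    (fun h => hα0 (by simpa [h] using hαP)) hmP

theorem stmt_6 (p : ℕ) (hp : p.Prime) (m : ℕ+) (f : ℕ) (hm : (m : ℕ) = p ^ f)
    (hm2 : 2 < (m : ℕ))
    (α : 𝓞 (CyclotomicField m ℚ))
    (hα : ∀ Q : Ideal (𝓞 (CyclotomicField m ℚ)), Q.IsPrime →
      (p : 𝓞 (CyclotomicField m ℚ)) ∈ Q → α ∉ Q) :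
    ∃ a : ℤ,
      Algebra.norm ℚ (algebraMap (𝓞 (CyclotomicField m ℚ)) (CyclotomicField m ℚ) α) = (a : ℚ) ∧
      a ≡ 1 [ZMOD ((m : ℕ) : ℤ)] :=
  stmt_6_general p m f hm hm2 α hα
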